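/- Let F be a field and let n, m be positive integers. Let G = ([n], E) and H = ([n], E') be directed graphs each with exactly m arcs, and fix bijections α: [m] → E and β: [m] → E'. Let S_G ∈ T(n×n×m, F) be the 3-way array whose k-th frontal slice is the elementary matrix E_{i,j} where (i,j) = α(k), and define S_H analogously using β. If there exist invertible matrices T ∈ GL(n, F) and R ∈ GL(m, F) such that Tᵗ S_G T = S_H^R, then G and H are isomorphic as directed graphs, i.e., there is a bijection σ: [n] → [n] such that (i,j) ∈ E if and only if (σ(i), σ(j)) ∈ E'. -/

import Mathlib

open Matrix

namespace Stmt1Aux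

variable {F : Type*} [Field F] {n : ℕ}

/-- x dominates i : neighborhoods of x contain those of i. -/
def Ge (e : Fin n → Fin n → Prop) (i x : Fin n) : Prop :=
  (∀ j, e i j → e x j) ∧ (∀ j, e j i → e j x)

/-- twins -/
def Tw (e : Fin n → Fin n → Prop) (i x : Fin n) : Prop :=
  (∀ j, e i j ↔ e x j) ∧ (∀ j, e j i ↔ e j x)

theorem tw_refl (e : Fin n → Fin n → Prop) (i : Fin n) : Tw e i i :=
  ⟨fun _ => Iff.rfl, fun _ => Iff.rfl⟩

theorem tw_symm {e : Fin n → Fin n → Prop} {i x : Fin n} (h : Tw e i x) : Tw e x i :=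
  ⟨fun j => (h.1 j).symm, fun j => (h.2 j).symm⟩

theorem tw_trans {e : Fin n → Fin n → Prop} {i x y : Fin n} (h : Tw e i x) (h' : Tw e x y) :
    Tw e i y :=
  ⟨fun j => (h.1 j).trans (h'.1 j), fun j => (h.2 j).trans (h'.2 j)⟩

theorem tw_ge {e : Fin n → Fin n → Prop} {i x : Fin n} (h : Tw e i x) : Ge e i x :=
  ⟨fun j => (h.1 j).mp, fun j => (h.2 j).mp⟩

theorem exists_good (T V : Matrix (Fin n) (Fin n) F) (hTV : T * V = 1) (i : Fin n) :
    ∃ a, T i a ≠ 0 ∧ V a i ≠ 0 := by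
  by_contra hc
  push_neg at hc
  have h0 : (T * V) i i = 0 := by
    rw [Matrix.mul_apply]
    refine Finset.sum_eq_zero fun a _ => ?_
    by_cases hA : T i a = 0
    · rw [hA, zero_mul]
    · rw [hc a hA, mul_zero]
  rw [hTV] at h0
  simp [Matrix.one_apply] at h0

section Core

variable (e e' : Fin n → Fin n → Prop) (T V : Matrix (Fin n) (Fin n) F)

theorem transfer (hTV : T * V = 1) (hVT : V * T = 1)
    (L1 : ∀ i j a b, e i j → T i a ≠ 0 → T j b ≠ 0 → e' a b)
    (L2 : ∀ a b x y, e' a b → V a x ≠ 0 → V b y ≠ 0 → e x y)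
    {i a x c : Fin n} (hg1 : T i a ≠ 0) (hg2 : V a i ≠ 0)
    (hx : Ge e i x) (hc : T x c ≠ 0) :
    Ge e' a c ∧ (Tw e' a c → Tw e i x) := by
  obtain ⟨y, hVcy, hTyc⟩ := exists_good V T hVT c
  have hxy : Ge e x y := by
    constructor
    · intro j hxj
      obtain ⟨bj, hjb, hbj⟩ := exists_good T V hTV j
      exact L2 c bj y j (L1 x j c bj hxj hc hjb) hVcy hbj
    · intro j hjx
      obtain ⟨bj, hjb, hbj⟩ := exists_good T V hTV j
      exact L2 bj c j y (L1 j x bj c hjx hjb hc) hbj hVcy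
  have hac : Ge e' a c := by
    constructor
    · intro b hab
      obtain ⟨jb, hVbj, hTjb⟩ := exists_good V T hVT b
      exact L1 y jb c b (hxy.1 jb (hx.1 jb (L2 a b i jb hab hg2 hVbj))) hTyc hTjb
    · intro b hba
      obtain ⟨jb, hVbj, hTjb⟩ := exists_good V T hVT b
      exact L1 jb y b c (hxy.2 jb (hx.2 jb (L2 b a jb i hba hVbj hg2))) hTjb hTyc
  refine ⟨hac, fun htw => ⟨fun j => ⟨fun hij => hx.1 j hij, fun hxj => ?_⟩,
      fun j => ⟨fun hji => hx.2 j hji, fun hjx => ?_⟩⟩⟩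
  · obtain ⟨bj, hjb, hbj⟩ := exists_good T V hTV j
    exact L2 a bj i j ((htw.1 bj).mpr (L1 x j c bj hxj hc hjb)) hg2 hbj
  · obtain ⟨bj, hjb, hbj⟩ := exists_good T V hTV j
    exact L2 bj a j i ((htw.2 bj).mpr (L1 j x bj c hjx hjb hc)) hbj hg2

theorem twin_transfer (hTV : T * V = 1)
    (L1 : ∀ i j a b, e i j → T i a ≠ 0 → T j b ≠ 0 → e' a b)
    (L2 : ∀ a b x y, e' a b → V a x ≠ 0 → V b y ≠ 0 → e x y)
    {i a i' a' : Fin n} (h1 : T i a ≠ 0) (h2 : V a i ≠ 0)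
    (h1' : T i' a' ≠ 0) (h2' : V a' i' ≠ 0) (htw : Tw e' a a') : Tw e i i' := by
  constructor <;> intro j
  · constructor
    · intro hij
      obtain ⟨bj, hjb, hbj⟩ := exists_good T V hTV j
      exact L2 a' bj i' j ((htw.1 bj).mp (L1 i j a bj hij h1 hjb)) h2' hbj
    · intro hij'
      obtain ⟨bj, hjb, hbj⟩ := exists_good T V hTV j
      exact L2 a bj i j ((htw.1 bj).mpr (L1 i' j a' bj hij' h1' hjb)) h2 hbj
  · constructor
    · intro hji
      obtain ⟨bj, hjb, hbj⟩ := exists_good T V hTV j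
      exact L2 bj a' j i' ((htw.2 bj).mp (L1 j i bj a hji hjb h1)) hbj h2'
    · intro hji'
      obtain ⟨bj, hjb, hbj⟩ := exists_good T V hTV j
      exact L2 bj a j i ((htw.2 bj).mpr (L1 j i' bj a' hji' hjb h1')) hbj h2

end Core

theorem card_le (T V : Matrix (Fin n) (Fin n) F) (hTV : T * V = 1)
    (p q : Fin n → Prop)
    (h1 : ∀ x c, p x → T x c ≠ 0 → q c) :
    Nat.card {x // p x} ≤ Nat.card {c // q c} := by
  classical
  let Φ : ({x // p x} → F) →ₗ[F] ({c // q c} → F) :=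
    { toFun := fun l c => ∑ x : {x // p x}, l x * T x.1 c.1
      map_add' := by
        intro l1 l2
        funext c
        simp [add_mul, Finset.sum_add_distrib]
      map_smul' := by
        intro r l
        funext c
        simp [Finset.mul_sum, mul_assoc] }
  have hker : ∀ l, Φ l = 0 → l = 0 := by
    intro l hl
    set μ : Fin n → F := fun t => if h : p t then l ⟨t, h⟩ else 0 with hμdef
    have hsum : ∀ c : Fin n, ∑ t : Fin n, μ t * T t c = ∑ x : {x // p x}, l x * T x.1 c := by
      intro c
      rw [← Finset.sum_filter_add_sum_filter_not Finset.univ p (fun t => μ t * T t c)]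
      have h2 : ∑ t ∈ Finset.univ.filter (fun t => ¬ p t), μ t * T t c = 0 :=
        Finset.sum_eq_zero fun t ht => by
          simp only [μ, dif_neg (Finset.mem_filter.mp ht).2, zero_mul]
      rw [h2, add_zero]
      rw [Finset.sum_subtype (p := p) (Finset.univ.filter p) (fun x => by simp)
        (fun t => μ t * T t c)]
      exact Finset.sum_congr rfl fun x _ => by simp only [μ, dif_pos x.2]
    have hμT : μ ᵥ* T = 0 := by
      funext c
      have hv : (μ ᵥ* T) c = ∑ t : Fin n, μ t * T t c := by
        simp [Matrix.vecMul, dotProduct]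
      rw [hv]
      by_cases hq : q c
      · rw [hsum c]
        have := congrFun hl ⟨c, hq⟩
        simpa [Φ] using this
      · refine Finset.sum_eq_zero fun t _ => ?_
        by_cases hp : p t
        · have hTz : T t c = 0 := by
            by_contra hne
            exact hq (h1 t c hp hne)
          rw [hTz, mul_zero]
        · simp only [μ, dif_neg hp, zero_mul]
    have hμ0 : μ = 0 := by
      have h3 := congrArg (fun w => w ᵥ* V) hμT
      simpa [Matrix.vecMul_vecMul, hTV, Matrix.vecMul_one, Matrix.zero_vecMul] using h3
    funext x
    have := congrFun hμ0 x.1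
    simpa [μ, dif_pos x.2] using this
  have hinj : Function.Injective Φ := by
    intro l1 l2 h12
    have := hker (l1 - l2) (by rw [map_sub, h12, sub_self])
    exact sub_eq_zero.mp this
  have hle := LinearMap.finrank_le_finrank_of_injective hinj
  rw [Module.finrank_fintype_fun_eq_card, Module.finrank_fintype_fun_eq_card] at hle
  simpa [Nat.card_eq_fintype_card] using hle

theorem card_eq (T V : Matrix (Fin n) (Fin n) F) (hTV : T * V = 1) (hVT : V * T = 1)
    (p q : Fin n → Prop)
    (h1 : ∀ x c, p x → T x c ≠ 0 → q c)
    (h2 : ∀ b z, q b → V b z ≠ 0 → p z) :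
    Nat.card {x // p x} = Nat.card {c // q c} :=
  le_antisymm (card_le T V hTV p q h1) (card_le V T hVT q p h2)

theorem card_split (p t : Fin n → Prop) (h : ∀ x, t x → p x) :
    Nat.card {x // p x} = Nat.card {x // t x} + Nat.card {x // p x ∧ ¬ t x} := by
  classical
  have heqv : {x // p x} ≃ ({x // t x} ⊕ {x // p x ∧ ¬ t x}) :=
    { toFun := fun x => if hx : t x.1 then Sum.inl ⟨x.1, hx⟩ else Sum.inr ⟨x.1, x.2, hx⟩
      invFun := fun y => Sum.elim (fun z => ⟨z.1, h z.1 z.2⟩) (fun z => ⟨z.1, z.2.1⟩) y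
      left_inv := by
        intro x
        by_cases hx : t x.1 <;> simp [hx]
      right_inv := by
        rintro (z | z)
        · simp [z.2]
        · simp [z.2.2] }
  rw [Nat.card_congr heqv, Nat.card_sum]

theorem class_card (e e' : Fin n → Fin n → Prop) (T V : Matrix (Fin n) (Fin n) F)
    (hTV : T * V = 1) (hVT : V * T = 1)
    (L1 : ∀ i j a b, e i j → T i a ≠ 0 → T j b ≠ 0 → e' a b)
    (L2 : ∀ a b x y, e' a b → V a x ≠ 0 → V b y ≠ 0 → e x y)
    {i a : Fin n} (h1 : T i a ≠ 0) (h2 : V a i ≠ 0) :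
    Nat.card {x // Tw e i x} = Nat.card {b // Tw e' a b} := by
  have cardA : Nat.card {x // Ge e i x} = Nat.card {b // Ge e' a b} := by
    refine card_eq T V hTV hVT _ _ ?_ ?_
    · intro x c hx hc
      exact (transfer e e' T V hTV hVT L1 L2 h1 h2 hx hc).1
    · intro b z hb hz
      exact (transfer e' e V T hVT hTV L2 L1 h2 h1 hb hz).1
  have cardS : Nat.card {x // Ge e i x ∧ ¬ Tw e i x}
      = Nat.card {b // Ge e' a b ∧ ¬ Tw e' a b} := by
    refine card_eq T V hTV hVT _ _ ?_ ?_
    · intro x c hx hc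
      have r := transfer e e' T V hTV hVT L1 L2 h1 h2 hx.1 hc
      exact ⟨r.1, fun ht => hx.2 (r.2 ht)⟩
    · intro b z hb hz
      have r := transfer e' e V T hVT hTV L2 L1 h2 h1 hb.1 hz
      exact ⟨r.1, fun ht => hb.2 (r.2 ht)⟩
  have s1 := card_split (p := Ge e i) (t := Tw e i) (fun x h => tw_ge h)
  have s2 := card_split (p := Ge e' a) (t := Tw e' a) (fun x h => tw_ge h)
  omega

theorem main (e e' : Fin n → Fin n → Prop) (T V : Matrix (Fin n) (Fin n) F)
    (hTV : T * V = 1) (hVT : V * T = 1)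
    (L1 : ∀ i j a b, e i j → T i a ≠ 0 → T j b ≠ 0 → e' a b)
    (L2 : ∀ a b x y, e' a b → V a x ≠ 0 → V b y ≠ 0 → e x y) :
    ∃ σ : Equiv.Perm (Fin n), ∀ i j, e i j ↔ e' (σ i) (σ j) := by
  classical
  choose ai hai1 hai2 using exists_good T V hTV
  let s' : Setoid (Fin n) :=
    ⟨fun a b => Tw e' a b, ⟨fun a => tw_refl e' a, tw_symm, tw_trans⟩⟩
  let f : Fin n → Quotient s' := fun x => Quotient.mk s' (ai x)
  let g : Fin n → Quotient s' := fun b => Quotient.mk s' b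
  have hfib : ∀ c : Quotient s', Nat.card {x // f x = c} = Nat.card {b // g b = c} := by
    intro c
    induction c using Quotient.ind with
    | _ a => ?_
    obtain ⟨x₀, hV0, hT0⟩ := exists_good V T hVT a
    have key : ∀ x, (f x = Quotient.mk s' a) ↔ Tw e x₀ x := by
      intro x
      have hiff : (f x = Quotient.mk s' a) ↔ Tw e' (ai x) a :=
        ⟨fun hh => Quotient.exact hh, fun hh => Quotient.sound hh⟩
      rw [hiff]
      constructor
      · intro htw
        exact twin_transfer e e' T V hTV L1 L2 hT0 hV0 (hai1 x) (hai2 x) (tw_symm htw)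
      · intro htw
        exact twin_transfer e' e V T hVT L2 L1 (hai2 x) (hai1 x) hV0 hT0 (tw_symm htw)
    have keyg : ∀ b, (g b = Quotient.mk s' a) ↔ Tw e' a b := by
      intro b
      exact ⟨fun hh => tw_symm (Quotient.exact hh), fun hh => Quotient.sound (tw_symm hh)⟩
    calc Nat.card {x // f x = Quotient.mk s' a}
        = Nat.card {x // Tw e x₀ x} := Nat.card_congr (Equiv.subtypeEquivRight key)
      _ = Nat.card {b // Tw e' a b} :=
          class_card e e' T V hTV hVT L1 L2 hT0 hV0
      _ = Nat.card {b // g b = Quotient.mk s' a} :=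
          (Nat.card_congr (Equiv.subtypeEquivRight keyg)).symm
  have hne : ∀ c : Quotient s', Nonempty ({x // f x = c} ≃ {b // g b = c}) := by
    intro c
    haveI : Fintype {x // f x = c} := Fintype.ofFinite _
    haveI : Fintype {b // g b = c} := Fintype.ofFinite _
    refine ⟨Fintype.equivOfCardEq ?_⟩
    have := hfib c
    rwa [Nat.card_eq_fintype_card, Nat.card_eq_fintype_card] at this
  let eqv : ∀ c : Quotient s', {x // f x = c} ≃ {b // g b = c} := fun c => (hne c).some
  let σ : Equiv.Perm (Fin n) := Equiv.ofFiberEquiv eqv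
  have hσ : ∀ x, Tw e' (ai x) (σ x) := by
    intro x
    have hmap : g (σ x) = f x := Equiv.ofFiberEquiv_map eqv x
    exact tw_symm (Quotient.exact hmap)
  refine ⟨σ, fun i j => ⟨fun hij => ?_, fun hσij => ?_⟩⟩
  · have h1 : e' (ai i) (ai j) := L1 i j (ai i) (ai j) hij (hai1 i) (hai1 j)
    have h2 : e' (σ i) (ai j) := ((hσ i).1 (ai j)).mp h1
    exact ((hσ j).2 (σ i)).mp h2
  · have h2 : e' (σ i) (ai j) := ((hσ j).2 (σ i)).mpr hσij
    have h1 : e' (ai i) (ai j) := ((hσ i).1 (ai j)).mpr h2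
    exact L2 (ai i) (ai j) i j h1 (hai2 i) (hai2 j)

theorem conj_entry (P Q : Matrix (Fin n) (Fin n) F) (i j a b : Fin n) :
    (Pᵀ * Matrix.single i j (1 : F) * Q) a b = P i a * Q j b := by
  have hstep : ∀ q, (Pᵀ * Matrix.single i j (1 : F)) a q
      = if j = q then P i a else 0 := by
    intro q
    rw [Matrix.mul_apply]
    rw [Finset.sum_eq_single i]
    · by_cases hj : j = q <;>
        simp [Matrix.single, Matrix.transpose_apply, hj]
    · intro p _ hp
      have : ¬ (i = p ∧ j = q) := fun hh => hp hh.1.symm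
      simp [Matrix.single, Matrix.transpose_apply, this]
    · intro hi
      exact absurd (Finset.mem_univ i) hi
  rw [Matrix.mul_apply]
  calc ∑ q, (Pᵀ * Matrix.single i j (1 : F)) a q * Q q b
      = ∑ q, (if j = q then P i a * Q q b else 0) := by
        refine Finset.sum_congr rfl fun q _ => ?_
        rw [hstep q]
        by_cases hj : j = q <;> simp [hj]
    _ = P i a * Q j b := by rw [Finset.sum_ite_eq]; simp

end Stmt1Aux

open Stmt1Aux in
/-- For directed graphs `G = ([n], E)` and `H = ([n], E')` each with `m` arcs,
with 3-way arrays `S_G`, `S_H` whose frontal slices are the elementary matrices of the arcs: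
if there are invertible matrices `T ∈ GL(n,F)`, `R ∈ GL(m,F)` with `Tᵗ S_G T = S_H ^ R`,
then `G ≅ H` as directed graphs. -/
theorem stmt_1 (F : Type*) [Field F] (n m : ℕ) (hn : 0 < n) (hm : 0 < m)
    (E E' : Finset (Fin n × Fin n))
    (α : Fin m ≃ {p : Fin n × Fin n // p ∈ E})
    (β : Fin m ≃ {p : Fin n × Fin n // p ∈ E'})
    (T : Matrix (Fin n) (Fin n) F) (R : Matrix (Fin m) (Fin m) F)
    (hT : IsUnit T) (hR : IsUnit R)
    (h : ∀ k : Fin m,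
      Tᵀ * Matrix.single (α k).1.1 (α k).1.2 (1 : F) * T
        = ∑ k' : Fin m, R k' k • Matrix.single (β k').1.1 (β k').1.2 (1 : F)) :
    ∃ σ : Equiv.Perm (Fin n), ∀ p : Fin n × Fin n, p ∈ E ↔ (σ p.1, σ p.2) ∈ E' := by
  classical
  -- inverses
  set V : Matrix (Fin n) (Fin n) F := ↑hT.unit⁻¹ with hVdef
  have hTV : T * V = 1 := by
    have := hT.unit.mul_inv
    rwa [hT.unit_spec] at this
  have hVT : V * T = 1 := by
    have := hT.unit.inv_mul
    rwa [hT.unit_spec] at this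
  set R' : Matrix (Fin m) (Fin m) F := ↑hR.unit⁻¹ with hR'def
  have hRR' : R * R' = 1 := by
    have := hR.unit.mul_inv
    rwa [hR.unit_spec] at this
  -- L1
  have L1 : ∀ i j a b : Fin n, (i, j) ∈ E → T i a ≠ 0 → T j b ≠ 0 → (a, b) ∈ E' := by
    intro i j a b hij hTa hTb
    by_contra hab
    set k := α.symm ⟨(i, j), hij⟩ with hkdef
    have hαk : ((α k : {p : Fin n × Fin n // p ∈ E}) : Fin n × Fin n) = (i, j) := by
      rw [hkdef, Equiv.apply_symm_apply]
    have hentry := congrFun (congrFun (h k) a) b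
    have hL : (Tᵀ * Matrix.single (α k).1.1 (α k).1.2 (1 : F) * T) a b
        = T i a * T j b := by
      rw [conj_entry]
      rw [show (α k).1.1 = i from by rw [hαk], show (α k).1.2 = j from by rw [hαk]]
    have hRz : (∑ k' : Fin m,
        R k' k • Matrix.single (β k').1.1 (β k').1.2 (1 : F)) a b = 0 := by
      rw [Matrix.sum_apply]
      refine Finset.sum_eq_zero fun k' _ => ?_
      rw [Matrix.smul_apply]
      have hz : Matrix.single (β k').1.1 (β k').1.2 (1 : F) a b = 0 := by
        have hcond : ¬ ((β k').1.1 = a ∧ (β k').1.2 = b) := by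
          rintro ⟨hh1, hh2⟩
          apply hab
          have : ((β k') : Fin n × Fin n) = (a, b) := by
            rw [← hh1, ← hh2]
          rw [← this]
          exact (β k').2
        simp [Matrix.single, hcond]
      rw [hz, smul_zero]
    rw [hL, hRz] at hentry
    exact mul_ne_zero hTa hTb hentry
  -- key identity for L2
  have key : ∀ k'' : Fin m,
      Vᵀ * Matrix.single (β k'').1.1 (β k'').1.2 (1 : F) * V
        = ∑ kk : Fin m, R' kk k'' • Matrix.single (α kk).1.1 (α kk).1.2 (1 : F) := by
    intro k''
    have step1 : Matrix.single (β k'').1.1 (β k'').1.2 (1 : F)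
        = ∑ kk : Fin m, R' kk k''
            • (Tᵀ * Matrix.single (α kk).1.1 (α kk).1.2 (1 : F) * T) := by
      have hs : ∑ kk : Fin m, R' kk k''
            • (Tᵀ * Matrix.single (α kk).1.1 (α kk).1.2 (1 : F) * T)
          = ∑ kk : Fin m, R' kk k''
            • ∑ k' : Fin m, R k' kk • Matrix.single (β k').1.1 (β k').1.2 (1 : F) := by
        refine Finset.sum_congr rfl fun kk _ => ?_
        rw [h kk]
      rw [hs]
      have hswap : ∑ kk : Fin m, R' kk k''
            • ∑ k' : Fin m, R k' kk • Matrix.single (β k').1.1 (β k').1.2 (1 : F)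
          = ∑ k' : Fin m, ((R * R') k' k'')
            • Matrix.single (β k').1.1 (β k').1.2 (1 : F) := by
        simp_rw [Finset.smul_sum, smul_smul]
        rw [Finset.sum_comm]
        refine Finset.sum_congr rfl fun k' _ => ?_
        rw [← Finset.sum_smul, Matrix.mul_apply]
        congr 1
        exact Finset.sum_congr rfl fun kk _ => mul_comm _ _
      rw [hswap, hRR']
      have : ∑ k' : Fin m, ((1 : Matrix (Fin m) (Fin m) F) k' k'')
            • Matrix.single (β k').1.1 (β k').1.2 (1 : F)
          = Matrix.single (β k'').1.1 (β k'').1.2 (1 : F) := by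
        rw [Finset.sum_eq_single k'']
        · simp [Matrix.one_apply]
        · intro k' _ hk'
          simp [Matrix.one_apply, hk']
        · intro hk''
          exact absurd (Finset.mem_univ k'') hk''
      rw [this]
    rw [step1]
    rw [Matrix.mul_sum, Matrix.sum_mul]
    refine Finset.sum_congr rfl fun kk _ => ?_
    rw [Matrix.mul_smul, Matrix.smul_mul]
    congr 1
    calc Vᵀ * (Tᵀ * Matrix.single (α kk).1.1 (α kk).1.2 (1 : F) * T) * V
        = (Vᵀ * Tᵀ) * Matrix.single (α kk).1.1 (α kk).1.2 (1 : F) * (T * V) := by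
          noncomm_ring
      _ = Matrix.single (α kk).1.1 (α kk).1.2 (1 : F) := by
          rw [← Matrix.transpose_mul, hTV, Matrix.transpose_one, one_mul, mul_one]
  -- L2
  have L2 : ∀ a b x y : Fin n, (a, b) ∈ E' → V a x ≠ 0 → V b y ≠ 0 → (x, y) ∈ E := by
    intro a b x y hab hVa hVb
    by_contra hxy
    set k'' := β.symm ⟨(a, b), hab⟩ with hkdef
    have hβk : ((β k'' : {p : Fin n × Fin n // p ∈ E'}) : Fin n × Fin n) = (a, b) := by
      rw [hkdef, Equiv.apply_symm_apply]
    have hentry := congrFun (congrFun (key k'') x) y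
    have hL : (Vᵀ * Matrix.single (β k'').1.1 (β k'').1.2 (1 : F) * V) x y
        = V a x * V b y := by
      rw [conj_entry]
      rw [show (β k'').1.1 = a from by rw [hβk], show (β k'').1.2 = b from by rw [hβk]]
    have hRz : (∑ kk : Fin m,
        R' kk k'' • Matrix.single (α kk).1.1 (α kk).1.2 (1 : F)) x y = 0 := by
      rw [Matrix.sum_apply]
      refine Finset.sum_eq_zero fun kk _ => ?_
      rw [Matrix.smul_apply]
      have hz : Matrix.single (α kk).1.1 (α kk).1.2 (1 : F) x y = 0 := by
        have hcond : ¬ ((α kk).1.1 = x ∧ (α kk).1.2 = y) := by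
          rintro ⟨hh1, hh2⟩
          apply hxy
          have : ((α kk) : Fin n × Fin n) = (x, y) := by
            rw [← hh1, ← hh2]
          rw [← this]
          exact (α kk).2
        simp [Matrix.single, hcond]
      rw [hz, smul_zero]
    rw [hL, hRz] at hentry
    exact mul_ne_zero hVa hVb hentry
  obtain ⟨σ, hσ⟩ := Stmt1Aux.main (fun i j => (i, j) ∈ E) (fun a b => (a, b) ∈ E')
    T V hTV hVT L1 L2
  exact ⟨σ, fun p => hσ p.1 p.2⟩
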